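/- arXiv:1806.09187 — 3 statements merged into one kernel-verified Lean document; each statement's English description precedes it below -/
import Mathlib

section
/- Let γ = (x, y) be a smooth unit-speed curve in L² with g(γ̇, γ̇) = ε ∈ {1, −1}, and set u = y + x, v = y − x. Then u̇(s) · v̇(s) = ε for all s. Moreover, if κ = ε(ẍẏ − ẋÿ) is the curvature and 𝒦 = u̇ is the geometric linear momentum, then 𝒦̇ = κ𝒦. -/
/-- for a unit-speed curve in L² with g(γ̇,γ̇) = ε = ±1 and
null coordinates u = y + x, v = y - x, one has u̇v̇ = ε and 𝒦̇ = κ𝒦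
where κ = ε(ẍẏ - ẋÿ) and 𝒦 = u̇. -/
theorem stmt_8 (x y : ℝ → ℝ) (ε : ℝ) (hε : ε = 1 ∨ ε = -1)
    (hx : ContDiff ℝ (⊤ : ℕ∞) x) (hy : ContDiff ℝ (⊤ : ℕ∞) y)
    (hunit : ∀ s, -(deriv x s) ^ 2 + (deriv y s) ^ 2 = ε) :
    ∀ s,
      deriv (fun t => y t + x t) s * deriv (fun t => y t - x t) s = ε ∧
      deriv (deriv (fun t => y t + x t)) s =
        (ε * (deriv (deriv x) s * deriv y s - deriv x s * deriv (deriv y) s))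
          * deriv (fun t => y t + x t) s := by
  have hx1 : Differentiable ℝ x := hx.differentiable (by simp)
  have hy1 : Differentiable ℝ y := hy.differentiable (by simp)
  have hx' : ContDiff ℝ (↑(⊤:ℕ∞)) x := hx.of_le (by simp)
  have hy' : ContDiff ℝ (↑(⊤:ℕ∞)) y := hy.of_le (by simp)
  have hx2 : Differentiable ℝ (deriv x) :=
    (contDiff_infty_iff_deriv.mp hx').2.differentiable (by simp)
  have hy2 : Differentiable ℝ (deriv y) :=
    (contDiff_infty_iff_deriv.mp hy').2.differentiable (by simp)
  have hu : deriv (fun t => y t + x t) = fun s => deriv y s + deriv x s := by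
    funext s; exact deriv_add (hy1 s) (hx1 s)
  have hv : deriv (fun t => y t - x t) = fun s => deriv y s - deriv x s := by
    funext s; exact deriv_sub (hy1 s) (hx1 s)
  intro s
  have hrel : deriv x s * deriv (deriv x) s = deriv y s * deriv (deriv y) s := by
    have hc : (fun t => -(deriv x t) ^ 2 + (deriv y t) ^ 2) = fun _ => ε := by
      funext t; exact hunit t
    have h0 : deriv (fun t => -(deriv x t) ^ 2 + (deriv y t) ^ 2) s = 0 := by
      rw [hc]; simp
    have h1 : deriv (fun t => -(deriv x t) ^ 2 + (deriv y t) ^ 2) s =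
        -(2 * deriv x s * deriv (deriv x) s) + 2 * deriv y s * deriv (deriv y) s := by
      have := ((hx2 s).pow 2).neg.add ((hy2 s).pow 2)
      rw [deriv_fun_add ((hx2 s).fun_pow 2).fun_neg ((hy2 s).fun_pow 2), deriv.fun_neg,
        deriv_fun_pow (hx2 s) 2, deriv_fun_pow (hy2 s) 2]
      ring
    rw [h1] at h0; linarith
  have hu2 : deriv (deriv (fun t => y t + x t)) s =
      deriv (deriv y) s + deriv (deriv x) s := by
    rw [hu]; exact deriv_add (hy2 s) (hx2 s)
  have hε2 : ε ^ 2 = 1 := by rcases hε with h | h <;> rw [h] <;> norm_num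
  constructor
  · simp only [hu, hv]
    nlinarith [hunit s]
  · have h3 : deriv (fun s => deriv y s + deriv x s) s =
        deriv (deriv y) s + deriv (deriv x) s := deriv_add (hy2 s) (hx2 s)
    simp only [hu, h3]
    linear_combination (-ε*(deriv (deriv x) s + deriv (deriv y) s))*(hunit s)
      + (-(deriv (deriv x) s + deriv (deriv y) s))*hε2
      + (-ε*(deriv x s + deriv y s))*hrel
end

section
/- Define γ(s) = ((u(s) − v(s))/2, (u(s) + v(s))/2) for s > 0, where v(s) = −log s and u(s) = −s²/2. Then γ is a unit-speed spacelike curve in L² whose curvature κ = ẍẏ − ẋÿ satisfies the translating-soliton equation κ(s) = g((1,1), N(s)) for all s > 0, where N = (ẏ, ẋ) is the normal. Equivalently κ(s) = e^{v(s)} = 1/s. -/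
/-!
In the null coordinates `u = y + x`, `v = y - x` the Lorentzian quantities of `γ` become
`-ẋ² + ẏ² = u̇ v̇`, `κ = (üv̇ - u̇v̈) / 2` and `g((1,1), N) = -ẏ + ẋ = -v̇`.
For `u = -s²/2`, `v = -log s` one has `u̇ = -s`, `v̇ = -1/s`, so `u̇ v̇ = 1`, and
`κ = (1/s + 1/s) / 2 = 1/s = -v̇ = e^v`.
-/

open Filter Topology

theorem deriv_deriv_eq_of_eventually_hasDerivAt {f f' : ℝ → ℝ} {a s : ℝ}
    (hf : ∀ᶠ t in 𝓝 s, HasDerivAt f (f' t) t) (hf' : HasDerivAt f' a s) :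
    deriv (deriv f) s = a := by
  have hderiv : deriv f =ᶠ[𝓝 s] f' := hf.mono fun _ ht => ht.deriv
  rw [hderiv.deriv_eq, hf'.deriv]

section NullCoordinates

variable {u v u' v' : ℝ → ℝ} {s : ℝ}

theorem eventually_hasDerivAt_half_sub (hu : ∀ᶠ t in 𝓝 s, HasDerivAt u (u' t) t)
    (hv : ∀ᶠ t in 𝓝 s, HasDerivAt v (v' t) t) :
    ∀ᶠ t in 𝓝 s, HasDerivAt (fun t => (u t - v t) / 2) ((u' t - v' t) / 2) t := by
  filter_upwards [hu, hv] with t hut hvt using (hut.sub hvt).div_const 2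

theorem eventually_hasDerivAt_half_add (hu : ∀ᶠ t in 𝓝 s, HasDerivAt u (u' t) t)
    (hv : ∀ᶠ t in 𝓝 s, HasDerivAt v (v' t) t) :
    ∀ᶠ t in 𝓝 s, HasDerivAt (fun t => (u t + v t) / 2) ((u' t + v' t) / 2) t := by
  filter_upwards [hu, hv] with t hut hvt using (hut.add hvt).div_const 2

end NullCoordinates

theorem hasDerivAt_neg_sq_div_two (t : ℝ) : HasDerivAt (fun s : ℝ => -(s ^ 2) / 2) (-t) t :=
  ((hasDerivAt_pow 2 t).neg.div_const 2).congr_deriv (by ring)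

theorem hasDerivAt_neg_log {t : ℝ} (ht : 0 < t) :
    HasDerivAt (fun s => -Real.log s) (-t⁻¹) t :=
  (Real.hasDerivAt_log ht.ne').neg

theorem hasDerivAt_neg_inv {t : ℝ} (ht : t ≠ 0) :
    HasDerivAt (fun s : ℝ => -s⁻¹) ((t ^ 2)⁻¹) t :=
  (hasDerivAt_inv ht).neg.congr_deriv (neg_neg _)

/-- the Lorentzian grim-reaper: with v(s) = -log s, u(s) = -s²/2,
the curve γ = ((u-v)/2, (u+v)/2) is unit-speed spacelike and its curvature
κ = ẍẏ - ẋÿ satisfies the translating-soliton equation κ = g((1,1), N),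
i.e. κ = -ẏ + ẋ, and κ(s) = e^{v(s)} = 1/s. -/
theorem stmt_15 (u v x y : ℝ → ℝ)
    (hv : v = fun s => -Real.log s)
    (hu : u = fun s => -(s ^ 2) / 2)
    (hx : x = fun s => (u s - v s) / 2)
    (hy : y = fun s => (u s + v s) / 2) :
    ∀ s, 0 < s →
      (-(deriv x s) ^ 2 + (deriv y s) ^ 2 = 1) ∧
      (deriv (deriv x) s * deriv y s - deriv x s * deriv (deriv y) s
        = -(deriv y s) + deriv x s) ∧
      (deriv (deriv x) s * deriv y s - deriv x s * deriv (deriv y) s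
        = Real.exp (v s)) ∧
      (deriv (deriv x) s * deriv y s - deriv x s * deriv (deriv y) s = 1 / s) := by
  subst hx hy
  intro s hs
  have hu' : ∀ᶠ t in 𝓝 s, HasDerivAt u (-t) t :=
    .of_forall fun t => hu ▸ hasDerivAt_neg_sq_div_two t
  have hv' : ∀ᶠ t in 𝓝 s, HasDerivAt v (-t⁻¹) t := by
    filter_upwards [eventually_gt_nhds hs] with t ht using hv ▸ hasDerivAt_neg_log ht
  have hx' := eventually_hasDerivAt_half_sub hu' hv'
  have hy' := eventually_hasDerivAt_half_add hu' hv'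
  rw [hx'.self_of_nhds.deriv, hy'.self_of_nhds.deriv,
    deriv_deriv_eq_of_eventually_hasDerivAt hx'
      (((hasDerivAt_neg' s).sub (hasDerivAt_neg_inv hs.ne')).div_const 2),
    deriv_deriv_eq_of_eventually_hasDerivAt hy'
      (((hasDerivAt_neg' s).add (hasDerivAt_neg_inv hs.ne')).div_const 2),
    hv, Real.exp_neg, Real.exp_log hs]
  refine ⟨?_, ?_, ?_, ?_⟩ <;> field_simp <;> ring
end

section
/- Fix c > 0 and define v(s) = log(c/(e^{cs} − 1)) and u(s) = −(1/c)(s + e^{−cs}/c) for s > 0. Then the curve γ(s) = ((u − v)/2, (u + v)/2) is unit-speed spacelike in L² and its curvature κ = ẍẏ − ẋÿ equals e^{v(s)} = c/(e^{cs} − 1) for all s > 0. -/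
/-!
In null coordinates `u = y + x`, `v = y - x` the Lorentzian speed is `-ẋ² + ẏ² = u̇ v̇` and the
curvature is `ẍẏ - ẋÿ = (üv̇ - u̇v̈)/2`. Writing `E = e^{cs}`, one finds `u̇ = -(E - 1)/(cE)` and
`v̇ = -cE/(E - 1)`, so `u̇ v̇ = 1`, and `ü = -1/E`, `v̈ = c²E/(E - 1)²` give curvature `c/(E - 1)`,
which is `e^v`.
-/

open Real Filter Topology

section NullCoordinates

variable {u v u' v' : ℝ → ℝ} {s a b U V : ℝ}

theorem neg_sq_deriv_add_sq_deriv_of_null (hu : HasDerivAt u a s) (hv : HasDerivAt v b s) :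
    -(deriv (fun t => (u t - v t) / 2) s) ^ 2 + (deriv (fun t => (u t + v t) / 2) s) ^ 2
      = a * b := by
  have hx : HasDerivAt (fun t => (u t - v t) / 2) ((a - b) / 2) s := (hu.sub hv).div_const 2
  have hy : HasDerivAt (fun t => (u t + v t) / 2) ((a + b) / 2) s := (hu.add hv).div_const 2
  rw [hx.deriv, hy.deriv]
  ring

theorem curvature_of_null
    (hu : ∀ᶠ t in 𝓝 s, HasDerivAt u (u' t) t) (hv : ∀ᶠ t in 𝓝 s, HasDerivAt v (v' t) t)
    (hu' : HasDerivAt u' U s) (hv' : HasDerivAt v' V s) :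
    deriv (deriv fun t => (u t - v t) / 2) s * deriv (fun t => (u t + v t) / 2) s
      - deriv (fun t => (u t - v t) / 2) s * deriv (deriv fun t => (u t + v t) / 2) s
      = (U * v' s - u' s * V) / 2 := by
  have hx : deriv (fun t => (u t - v t) / 2) =ᶠ[𝓝 s] fun t => (u' t - v' t) / 2 := by
    filter_upwards [hu, hv] with t hut hvt using ((hut.sub hvt).div_const 2).deriv
  have hy : deriv (fun t => (u t + v t) / 2) =ᶠ[𝓝 s] fun t => (u' t + v' t) / 2 := by
    filter_upwards [hu, hv] with t hut hvt using ((hut.add hvt).div_const 2).deriv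
  have hx' : HasDerivAt (fun t => (u' t - v' t) / 2) ((U - V) / 2) s := (hu'.sub hv').div_const 2
  have hy' : HasDerivAt (fun t => (u' t + v' t) / 2) ((U + V) / 2) s := (hu'.add hv').div_const 2
  rw [hx.deriv_eq, hy.deriv_eq, hx.eq_of_nhds, hy.eq_of_nhds, hx'.deriv, hy'.deriv]
  ring

end NullCoordinates

section ExpCurvatureCurve

variable {c : ℝ}

theorem hasDerivAt_exp_mul (c s : ℝ) : HasDerivAt (fun t => exp (c * t)) (exp (c * s) * c) s := by
  simpa using ((hasDerivAt_id s).const_mul c).exp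

theorem hasDerivAt_exp_neg_mul (c s : ℝ) :
    HasDerivAt (fun t => exp (-(c * t))) (exp (-(c * s)) * -c) s := by
  simpa using ((hasDerivAt_id s).const_mul c).neg.exp

theorem hasDerivAt_nullCoord_u (hc : c ≠ 0) (s : ℝ) :
    HasDerivAt (fun t => -(1 / c) * (t + exp (-(c * t)) / c)) ((exp (-(c * s)) - 1) / c) s := by
  refine (((hasDerivAt_id s).add ((hasDerivAt_exp_neg_mul c s).div_const c)).const_mul
    (-(1 / c))).congr_deriv ?_
  field_simp
  ring

theorem hasDerivAt_nullCoord_u' (hc : c ≠ 0) (s : ℝ) :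
    HasDerivAt (fun t => (exp (-(c * t)) - 1) / c) (-exp (-(c * s))) s := by
  refine (((hasDerivAt_exp_neg_mul c s).sub_const 1).div_const c).congr_deriv ?_
  field_simp

theorem hasDerivAt_nullCoord_v (hc : c ≠ 0) {s : ℝ} (hs : exp (c * s) - 1 ≠ 0) :
    HasDerivAt (fun t => log (c / (exp (c * t) - 1)))
      (-(c * exp (c * s) / (exp (c * s) - 1))) s := by
  refine (((hasDerivAt_const s c).fun_div ((hasDerivAt_exp_mul c s).sub_const 1) hs).log
    (div_ne_zero hc hs)).congr_deriv ?_
  field_simp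
  ring

theorem hasDerivAt_nullCoord_v' {s : ℝ} (hs : exp (c * s) - 1 ≠ 0) :
    HasDerivAt (fun t => -(c * exp (c * t) / (exp (c * t) - 1)))
      (c ^ 2 * exp (c * s) / (exp (c * s) - 1) ^ 2) s := by
  refine (((hasDerivAt_exp_mul c s).const_mul c).fun_div ((hasDerivAt_exp_mul c s).sub_const 1)
    hs).neg.congr_deriv ?_
  field_simp
  ring

theorem exp_mul_sub_one_pos (hc : 0 < c) {s : ℝ} (hs : 0 < s) : 0 < exp (c * s) - 1 := by
  have := one_lt_exp_iff.2 (mul_pos hc hs)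
  linarith

end ExpCurvatureCurve

/-- for c > 0, with v(s) = log(c/(e^{cs}-1)) and
u(s) = -(1/c)(s + e^{-cs}/c), the curve γ = ((u-v)/2, (u+v)/2) is unit-speed
spacelike and its curvature equals e^{v(s)} = c/(e^{cs}-1). -/
theorem stmt_16 (c : ℝ) (hc : 0 < c) (u v x y : ℝ → ℝ)
    (hv : v = fun s => Real.log (c / (Real.exp (c * s) - 1)))
    (hu : u = fun s => -(1 / c) * (s + Real.exp (-(c * s)) / c))
    (hx : x = fun s => (u s - v s) / 2)
    (hy : y = fun s => (u s + v s) / 2) :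
    ∀ s, 0 < s →
      (-(deriv x s) ^ 2 + (deriv y s) ^ 2 = 1) ∧
      (deriv (deriv x) s * deriv y s - deriv x s * deriv (deriv y) s
        = c / (Real.exp (c * s) - 1)) ∧
      (deriv (deriv x) s * deriv y s - deriv x s * deriv (deriv y) s
        = Real.exp (v s)) := by
  intro s hs
  subst hx hy
  have hE : exp (c * s) - 1 ≠ 0 := (exp_mul_sub_one_pos hc hs).ne'
  have hu' (t : ℝ) : HasDerivAt u ((exp (-(c * t)) - 1) / c) t :=
    hu ▸ hasDerivAt_nullCoord_u hc.ne' t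
  have hv' : ∀ᶠ t in 𝓝 s, HasDerivAt v (-(c * exp (c * t) / (exp (c * t) - 1))) t := by
    filter_upwards [Ioi_mem_nhds hs] with t ht
    exact hv ▸ hasDerivAt_nullCoord_v hc.ne' (exp_mul_sub_one_pos hc ht).ne'
  have hcurv := curvature_of_null (.of_forall hu') hv' (hasDerivAt_nullCoord_u' hc.ne' s)
    (hasDerivAt_nullCoord_v' hE)
  have hexp_v : exp (v s) = c / (exp (c * s) - 1) := by
    rw [hv, exp_log (div_pos hc (exp_mul_sub_one_pos hc hs))]
  rw [neg_sq_deriv_add_sq_deriv_of_null (hu' s) hv'.self_of_nhds, hcurv, hexp_v, exp_neg]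
  refine ⟨?_, ?_, ?_⟩ <;> field_simp <;> ring
end
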